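/- The substitution map f is well defined and injective on E(ω): if 𝚒, 𝚓 ∈ T(ω) satisfy Π(𝚒) = Π(𝚓), then Π(𝚒̃) = Π(𝚓̃); and if 𝚒, 𝚓 ∈ T(ω) satisfy Π(𝚒) ≠ Π(𝚓), then Π(𝚒̃) ≠ Π(𝚓̃). -/

import Mathlib

/-!
Let `𝚒` and `𝚓` first differ at index `N`. Whether `η` is inserted before the `n`-th symbol
depends only on `𝚒|_{n-1}`, so up to level `N` both words are rewritten to the same word `V`.
If moreover no substitution happens along `𝚒` or `𝚓` after level `N`, then `Π(𝚒) ↦ Π(𝚒̃)` and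
`Π(𝚓) ↦ Π(𝚓̃)` are restrictions of one homothety `Q_{𝚒|_N} → Q_V`, and both claims follow.

Either equality forces this. If `Π(𝚒) = Π(𝚓)`, the point lies on a face of each of the distinct
cubes `Q_{𝚒|_{N+1}}`, `Q_{𝚓|_{N+1}}` of the same level, so every later symbol of `𝚒` labels a
boundary subcube; as `𝚒` survives, the boundary subcubes along `𝚒` never all die. If
`Π(𝚒̃) = Π(𝚓̃)`, the same argument shows that every later symbol of `𝚒̃` is a boundary label,
while a substitution would insert the interior label `η₁`.
-/

open MeasureTheory ProbabilityTheory Set Filter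
open scoped ENNReal NNReal Topology Classical

noncomputable section

namespace FractalPercolation

/-! ### Words -/

/-- The finite word `𝚒|_n` obtained by truncating an infinite word. -/
def wordTake (d M : ℕ) (i : ℕ → Fin (M ^ d)) (n : ℕ) : List (Fin (M ^ d)) :=
  List.ofFn fun k : Fin n => i k

/-- The shift `σ^n 𝚒` of an infinite word. -/
def shiftW (d M : ℕ) (n : ℕ) (i : ℕ → Fin (M ^ d)) : ℕ → Fin (M ^ d) := fun t => i (n + t)

/-- The concatenation `𝚠𝚖` of a finite word with an infinite word. -/
def extendW (d M : ℕ) (w : List (Fin (M ^ d))) (m : ℕ → Fin (M ^ d)) : ℕ → Fin (M ^ d) :=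
  fun t => if h : t < w.length then w.get ⟨t, h⟩ else m (t - w.length)

/-! ### Geometry: cubes and the natural projection -/

/-- Lower-left corner of the `M`-adic cube labelled by the finite word `w`; the labelling
`lab` sends a symbol to the vector of integer offsets (in `{0,…,M-1}^d`) of the corresponding
subcube. -/
def corner (d M : ℕ) (lab : Fin (M ^ d) → Fin d → Fin M) :
    List (Fin (M ^ d)) → Fin d → ℝ
  | [] => fun _ => 0
  | i :: w => fun k => ((lab i k : ℝ) + corner d M lab w k) / (M : ℝ)

/-- The closed `M`-adic cube `Q_𝚠 ⊆ [0,1]^d` labelled by the finite word `w`. -/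
def cube (d M : ℕ) (lab : Fin (M ^ d) → Fin d → Fin M) (w : List (Fin (M ^ d))) :
    Set (Fin d → ℝ) :=
  {x | ∀ k, corner d M lab w k ≤ x k ∧ x k ≤ corner d M lab w k + ((M : ℝ) ^ w.length)⁻¹}

/-- The homothety `h_{Q_𝚠}` sending `[0,1]^d` onto `Q_𝚠`. -/
def hQ (d M : ℕ) (lab : Fin (M ^ d) → Fin d → Fin M) (w : List (Fin (M ^ d)))
    (y : Fin d → ℝ) : Fin d → ℝ :=
  fun k => corner d M lab w k + ((M : ℝ) ^ w.length)⁻¹ * y k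

/-- The natural projection `Π : Λ^ℕ → [0,1]^d`, `{Π(𝚒)} = ⋂_n Q_{𝚒|_n}`. -/
def PiInf (d M : ℕ) (lab : Fin (M ^ d) → Fin d → Fin M) (i : ℕ → Fin (M ^ d)) :
    Fin d → ℝ :=
  fun k => ⨆ n, corner d M lab (wordTake d M i n) k

/-- The cube concentric with the cube of lower-left corner `c` and side length `ℓ`,
with side length `κ·ℓ`. -/
def concCube (d : ℕ) (c : Fin d → ℝ) (ℓ κ : ℝ) : Set (Fin d → ℝ) :=
  {x | ∀ k, c k + (1 - κ) * ℓ / 2 ≤ x k ∧ x k ≤ c k + (1 + κ) * ℓ / 2}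

/-! ### The labelling -/

/-- The set `Λ_B` of labels of subcubes meeting the boundary. -/
def LamB (d M : ℕ) : Set (Fin (M ^ d)) := {i | (i : ℕ) < M ^ d - (M - 2) ^ d}

/-- `lab` is a genuine labelling of the `M^d` subcubes such that the symbols in `Λ_B`
are exactly those of subcubes meeting the boundary of `[0,1]^d`. -/
def LabSpec (d M : ℕ) (lab : Fin (M ^ d) → Fin d → Fin M) : Prop :=
  Function.Bijective lab ∧
    ∀ i, i ∈ LamB d M ↔ ∃ k, (lab i k : ℕ) = 0 ∨ (lab i k : ℕ) = M - 1

/-! ### The percolation process -/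

/-- The finite word `w` survives (i.e. `w ∈ T_{|w|}(ω)`): all its nonempty prefixes
are retained. -/
def Alive (d M : ℕ) {Ω : Type*} (X : List (Fin (M ^ d)) → Ω → Bool) (ω : Ω)
    (w : List (Fin (M ^ d))) : Prop :=
  ∀ u : List (Fin (M ^ d)), u ≠ [] → u <+: w → X u ω = true

/-- The infinite word `𝚒` survives, i.e. `𝚒 ∈ T(ω)`. -/
def TInf (d M : ℕ) {Ω : Type*} (X : List (Fin (M ^ d)) → Ω → Bool) (ω : Ω)
    (i : ℕ → Fin (M ^ d)) : Prop :=
  ∀ n, Alive d M X ω (wordTake d M i n)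

/-- The fractal percolation set `E(ω) = Π(T(ω))`. -/
def Eset (d M : ℕ) (lab : Fin (M ^ d) → Fin d → Fin M) {Ω : Type*}
    (X : List (Fin (M ^ d)) → Ω → Bool) (ω : Ω) : Set (Fin d → ℝ) :=
  {x | ∃ i, TInf d M X ω i ∧ PiInf d M lab i = x}

/-- `(X_𝚒)_{𝚒∈Λ^*}` are i.i.d. Bernoulli(p) random variables under `P`. -/
def PercSpec (d M : ℕ) {Ω : Type*} [MeasurableSpace Ω] (P : Measure Ω)
    (X : List (Fin (M ^ d)) → Ω → Bool) (p : ℝ) : Prop :=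
  (∀ w, Measurable (X w)) ∧
    iIndepFun X P ∧
    ∀ w, P {ω | X w ω = true} = ENNReal.ofReal p

/-- The σ-algebra `𝓑_n` generated by `{X_𝚒 : |𝚒| ≤ n}`. -/
def Bsig (d M : ℕ) {Ω : Type*} (X : List (Fin (M ^ d)) → Ω → Bool) (n : ℕ) :
    MeasurableSpace Ω :=
  ⨆ w ∈ {w : List (Fin (M ^ d)) | w.length ≤ n}, MeasurableSpace.comap (X w) ⊤

/-! ### The substitution map -/

/-- All subcubes of `Q_𝚠` meeting the boundary of `Q_𝚠` die at the next step. -/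
def BdryDead (d M : ℕ) {Ω : Type*} (X : List (Fin (M ^ d)) → Ω → Bool) (ω : Ω)
    (w : List (Fin (M ^ d))) : Prop :=
  ∀ j ∈ LamB d M, ¬ Alive d M X ω (w ++ [j])

/-- Auxiliary recursion for the substitution `𝚒 ↦ 𝚒̃`: `pfx` is the already processed
prefix of the original word. -/
def substAux (d M : ℕ) {Ω : Type*} (X : List (Fin (M ^ d)) → Ω → Bool)
    (e : List (Fin (M ^ d))) (ω : Ω) :
    List (Fin (M ^ d)) → List (Fin (M ^ d)) → List (Fin (M ^ d))
  | _, [] => []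
  | pfx, i :: rest =>
      (if BdryDead d M X ω pfx then e ++ [i] else [i]) ++
        substAux d M X e ω (pfx ++ [i]) rest

/-- The substitution `𝚠 ↦ 𝚠̃` (with substitution word `e = η`) applied to a finite word. -/
def substW (d M : ℕ) {Ω : Type*} (X : List (Fin (M ^ d)) → Ω → Bool)
    (e : List (Fin (M ^ d))) (ω : Ω) (w : List (Fin (M ^ d))) : List (Fin (M ^ d)) :=
  substAux d M X e ω ([]) w

/-- The point `Π(𝚒̃)` for an infinite word `𝚒`. -/
def PiTilde (d M : ℕ) (lab : Fin (M ^ d) → Fin d → Fin M) {Ω : Type*}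
    (X : List (Fin (M ^ d)) → Ω → Bool) (e : List (Fin (M ^ d))) (ω : Ω)
    (i : ℕ → Fin (M ^ d)) : Fin d → ℝ :=
  fun k => ⨆ n, corner d M lab (substW d M X e ω (wordTake d M i n)) k

/-- The image `F(ω) = f(E(ω))` of the substitution map. -/
def Fset (d M : ℕ) (lab : Fin (M ^ d) → Fin d → Fin M) {Ω : Type*}
    (X : List (Fin (M ^ d)) → Ω → Bool) (e : List (Fin (M ^ d))) (ω : Ω) :
    Set (Fin d → ℝ) :=
  {x | ∃ i, TInf d M X ω i ∧ PiTilde d M lab X e ω i = x}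

/-- The substitution word `e = η ∈ Λ^K` has length `K ≥ 1` and its first symbol labels
an inner cube. -/
def EtaSpec (d M K : ℕ) (e : List (Fin (M ^ d))) : Prop :=
  1 ≤ K ∧ e.length = K ∧ ∃ a l, e = a :: l ∧ a ∉ LamB d M

/-- `diam Q_𝚠 = M^{-|𝚠|}` (in the max-norm). -/
def diamQ (d M : ℕ) (w : List (Fin (M ^ d))) : ℝ := ((M : ℝ) ^ w.length)⁻¹

/-- The quantity `κ(s,K)` from the paper. -/
def kappa (d M : ℕ) (p : ℝ) (K : ℕ) (s : ℝ) : ℝ :=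
  1 - (((M : ℝ) - 2) ^ d / (M : ℝ) ^ d) * (1 - (M : ℝ) ^ (-(s * (K : ℝ)))) *
      (1 - p) ^ (M ^ d - (M - 2) ^ d)

/-- The quantity `κ' = lim_{K→∞} κ(s,K)` from the paper. -/
def kappa' (d M : ℕ) (p : ℝ) : ℝ :=
  1 - (((M : ℝ) - 2) ^ d / (M : ℝ) ^ d) * (1 - p) ^ (M ^ d - (M - 2) ^ d)

/-- The random sums `Y^t_n(ω) = Σ_{𝚒∈T_n(ω)} diam(Q_{𝚒̃})^t`. -/
def Yt (d M : ℕ) {Ω : Type*} (X : List (Fin (M ^ d)) → Ω → Bool)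
    (e : List (Fin (M ^ d))) (t : ℝ) (n : ℕ) (ω : Ω) : ℝ :=
  ∑ v : Fin n → Fin (M ^ d),
    if Alive d M X ω (List.ofFn v) then (diamQ d M (substW d M X e ω (List.ofFn v))) ^ t
    else 0

/-! ### Quasisymmetric maps -/

/-- `f` satisfies the quasisymmetry estimate with control function `η`. -/
def IsQSWith {α β : Type*} [PseudoMetricSpace α] [PseudoMetricSpace β]
    (η : ℝ≥0 → ℝ≥0) (f : α → β) : Prop :=
  ∀ x y z : α, x ≠ z →
    nndist (f x) (f y) / nndist (f x) (f z) ≤ η (nndist x y / nndist x z)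

/-- A homeomorphism is quasisymmetric if it admits a control function which is a
homeomorphism of `[0,∞)`. -/
def IsQSHomeo {α β : Type*} [MetricSpace α] [MetricSpace β] (f : α ≃ₜ β) : Prop :=
  ∃ η : ℝ≥0 ≃ₜ ℝ≥0, IsQSWith (⇑η) (⇑f)

/-! ### The auxiliary map g and the extension of f -/

/-- `g : [0,1]^d → [0,1]^d` is an `L`-bi-Lipschitz bijection of the unit cube, equal to the
identity on the boundary, mapping `I = (1-2/M)[0,1]^d` homothetically onto `(1-2/M)Q_η`. -/
def GSpec (d M K : ℕ) (lab : Fin (M ^ d) → Fin d → Fin M) (e : List (Fin (M ^ d)))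
    (L : ℝ) (g : (Fin d → ℝ) → (Fin d → ℝ)) : Prop :=
  Set.BijOn g (cube d M lab ([])) (cube d M lab ([])) ∧
    (∀ x ∈ cube d M lab ([]), ∀ y ∈ cube d M lab ([]),
      L⁻¹ * dist x y ≤ dist (g x) (g y) ∧ dist (g x) (g y) ≤ L * dist x y) ∧
    (∀ x ∈ frontier (cube d M lab ([] : List (Fin (M ^ d)))), g x = x) ∧
    (∃ v : Fin d → ℝ,
      ∀ x ∈ concCube d (fun _ => (0 : ℝ)) 1 (1 - 2 / (M : ℝ)),
        g x = ((M : ℝ) ^ K)⁻¹ • x + v) ∧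
    g '' concCube d (fun _ => (0 : ℝ)) 1 (1 - 2 / (M : ℝ)) =
      concCube d (corner d M lab e) (((M : ℝ) ^ K)⁻¹) (1 - 2 / (M : ℝ))

/-- `F` is (the coding of) the extension of the substitution map to `[0,1]^d`:
on surviving words it is the substitution map, and on a word whose largest surviving
prefix is `𝚒|_n` it is given by the two cases of the definition in the paper. -/
def ExtMapSpec (d M : ℕ) (lab : Fin (M ^ d) → Fin d → Fin M) {Ω : Type*}
    (X : List (Fin (M ^ d)) → Ω → Bool) (e : List (Fin (M ^ d)))
    (g : (Fin d → ℝ) → (Fin d → ℝ)) (ω : Ω)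
    (F : (ℕ → Fin (M ^ d)) → (Fin d → ℝ)) : Prop :=
  (∀ i, TInf d M X ω i → F i = PiTilde d M lab X e ω i) ∧
    ∀ (i : ℕ → Fin (M ^ d)) (n : ℕ),
      Alive d M X ω (wordTake d M i n) → ¬ Alive d M X ω (wordTake d M i (n + 1)) →
        ((∃ j ∈ LamB d M, Alive d M X ω (wordTake d M i n ++ [j])) →
          F i = hQ d M lab (substW d M X e ω (wordTake d M i n))
              (PiInf d M lab (shiftW d M n i))) ∧
        ((∀ j ∈ LamB d M, ¬ Alive d M X ω (wordTake d M i n ++ [j])) →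
          F i = hQ d M lab (substW d M X e ω (wordTake d M i n))
              (g (PiInf d M lab (shiftW d M n i))))

section Geometry

variable {d M : ℕ} {lab : Fin (M ^ d) → Fin d → Fin M}

def OnFace (lab : Fin (M ^ d) → Fin d → Fin M) (w : List (Fin (M ^ d))) (x : Fin d → ℝ)
    (k : Fin d) : Prop :=
  x k = corner d M lab w k ∨ x k = corner d M lab w k + ((M : ℝ) ^ w.length)⁻¹

lemma corner_cons (a : Fin (M ^ d)) (w : List (Fin (M ^ d))) (k : Fin d) :
    corner d M lab (a :: w) k = ((lab a k : ℝ) + corner d M lab w k) / M := rfl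

lemma corner_nonneg (w : List (Fin (M ^ d))) (k : Fin d) : 0 ≤ corner d M lab w k := by
  induction w with
  | nil => exact le_rfl
  | cons a w ih => rw [corner_cons]; positivity

lemma lab_add_one_le (a : Fin (M ^ d)) (k : Fin d) : (lab a k : ℝ) + 1 ≤ M := by
  exact_mod_cast (lab a k).isLt

lemma corner_add_inv_pow_le_one (hM : 0 < M) (w : List (Fin (M ^ d))) (k : Fin d) :
    corner d M lab w k + ((M : ℝ) ^ w.length)⁻¹ ≤ 1 := by
  have hM' : (0 : ℝ) < M := by exact_mod_cast hM
  induction w with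
  | nil => simp [corner]
  | cons a w ih =>
    have : ((lab a k : ℝ) + corner d M lab w k) / M + ((M : ℝ) ^ w.length * M)⁻¹ =
        ((lab a k : ℝ) + (corner d M lab w k + ((M : ℝ) ^ w.length)⁻¹)) / M := by
      field_simp
      ring
    rw [corner_cons, List.length_cons, pow_succ, this, div_le_one hM']
    linarith [lab_add_one_le (lab := lab) a k]

lemma corner_lt_one (hM : 0 < M) (w : List (Fin (M ^ d))) (k : Fin d) :
    corner d M lab w k < 1 := by
  have := corner_add_inv_pow_le_one (lab := lab) hM w k
  have : (0 : ℝ) < ((M : ℝ) ^ w.length)⁻¹ := by positivity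
  linarith

lemma corner_append (hM : 0 < M) (w u : List (Fin (M ^ d))) (k : Fin d) :
    corner d M lab (w ++ u) k = hQ d M lab w (corner d M lab u) k := by
  have hM' : (M : ℝ) ≠ 0 := by exact_mod_cast hM.ne'
  induction w with
  | nil => simp [hQ, corner]
  | cons a w ih =>
    simp only [hQ] at ih ⊢
    rw [List.cons_append, corner_cons, corner_cons, ih, List.length_cons, pow_succ]
    field_simp
    ring

lemma hQ_injective (hM : 0 < M) (w : List (Fin (M ^ d))) :
    Function.Injective (hQ d M lab w) := by
  intro y y' h
  funext k
  have hk := congrFun h k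
  simp only [hQ, add_right_inj] at hk
  exact mul_left_cancel₀ (by positivity) hk

lemma hQ_mem_cube (hM : 0 < M) (w : List (Fin (M ^ d))) {u : List (Fin (M ^ d))}
    {y : Fin d → ℝ} (hy : y ∈ cube d M lab u) : hQ d M lab w y ∈ cube d M lab (w ++ u) := by
  intro k
  have hs : (0 : ℝ) ≤ ((M : ℝ) ^ w.length)⁻¹ := by positivity
  obtain ⟨h₁, h₂⟩ := hy k
  rw [corner_append hM, List.length_append, pow_add, mul_inv]
  simp only [hQ]
  constructor <;> nlinarith [mul_le_mul_of_nonneg_left h₁ hs, mul_le_mul_of_nonneg_left h₂ hs]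

lemma cube_append_subset (hM : 0 < M) (w u : List (Fin (M ^ d))) :
    cube d M lab (w ++ u) ⊆ cube d M lab w := by
  intro x hx k
  have hs : (0 : ℝ) ≤ ((M : ℝ) ^ w.length)⁻¹ := by positivity
  obtain ⟨h₁, h₂⟩ := hx k
  rw [corner_append hM] at h₁ h₂
  rw [List.length_append, pow_add, mul_inv] at h₂
  simp only [hQ] at h₁ h₂
  have := corner_add_inv_pow_le_one (lab := lab) hM u k
  constructor <;>
    nlinarith [mul_le_mul_of_nonneg_left this hs,
      mul_nonneg hs (corner_nonneg (lab := lab) u k)]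

lemma corner_mem_cube (w : List (Fin (M ^ d))) : corner d M lab w ∈ cube d M lab w :=
  fun _ => ⟨le_rfl, le_add_of_nonneg_right (by positivity)⟩

lemma corner_mem_cube_of_prefix (hM : 0 < M) {u w : List (Fin (M ^ d))} (h : u <+: w) :
    corner d M lab w ∈ cube d M lab u := by
  obtain ⟨t, rfl⟩ := h
  exact cube_append_subset hM u t (corner_mem_cube _)

lemma iSup_corner_mem_cube (hM : 0 < M) (s : ℕ → List (Fin (M ^ d)))
    (hs : ∀ m n, m ≤ n → s m <+: s n) (n : ℕ) :
    (fun k => ⨆ m, corner d M lab (s m) k) ∈ cube d M lab (s n) := by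
  intro k
  have bound : ∀ m n, corner d M lab (s m) k ≤
      corner d M lab (s n) k + ((M : ℝ) ^ (s n).length)⁻¹ := by
    intro m n
    rcases le_total m n with h | h
    · exact ((corner_mem_cube_of_prefix hM (hs m n h) k).1).trans
        (le_add_of_nonneg_right (by positivity))
    · exact (corner_mem_cube_of_prefix hM (hs n m h) k).2
  exact ⟨le_ciSup ⟨_, Set.forall_mem_range.2 (bound · 0)⟩ n, ciSup_le (bound · n)⟩

lemma abs_sub_le_of_mem_cube {w : List (Fin (M ^ d))} {x y : Fin d → ℝ}
    (hx : x ∈ cube d M lab w) (hy : y ∈ cube d M lab w) (k : Fin d) :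
    |x k - y k| ≤ ((M : ℝ) ^ w.length)⁻¹ := by
  obtain ⟨hx₁, hx₂⟩ := hx k
  obtain ⟨hy₁, hy₂⟩ := hy k
  rw [abs_sub_le_iff]
  constructor <;> linarith

lemma eq_of_forall_mem_cube (hM : 1 < M) (s : ℕ → List (Fin (M ^ d)))
    (hlen : ∀ m, m ≤ (s m).length) {x y : Fin d → ℝ}
    (hx : ∀ m, x ∈ cube d M lab (s m)) (hy : ∀ m, y ∈ cube d M lab (s m)) : x = y := by
  have hM' : (1 : ℝ) < M := by exact_mod_cast hM
  funext k
  have hsmall : ∀ m : ℕ, |x k - y k| ≤ ((M : ℝ)⁻¹) ^ m := fun m =>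
    calc |x k - y k| ≤ ((M : ℝ) ^ (s m).length)⁻¹ := abs_sub_le_of_mem_cube (hx m) (hy m) k
      _ ≤ ((M : ℝ) ^ m)⁻¹ := inv_anti₀ (by positivity) (pow_le_pow_right₀ hM'.le (hlen m))
      _ = ((M : ℝ)⁻¹) ^ m := (inv_pow _ _).symm
  have hlim := tendsto_pow_atTop_nhds_zero_of_lt_one (by positivity) (inv_lt_one_of_one_lt₀ hM')
  exact sub_eq_zero.mp (abs_nonpos_iff.mp (ge_of_tendsto' hlim hsmall))

lemma exists_natCast_div_eq_corner (w : List (Fin (M ^ d))) (k : Fin d) :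
    ∃ a : ℕ, corner d M lab w k = a / (M : ℝ) ^ w.length := by
  induction w with
  | nil => exact ⟨0, by simp [corner]⟩
  | cons b w ih =>
    obtain ⟨a, ha⟩ := ih
    refine ⟨lab b k * M ^ w.length + a, ?_⟩
    rw [corner_cons, ha, List.length_cons, pow_succ]
    push_cast
    rcases eq_or_ne (M : ℝ) 0 with h | h
    · simp [h]
    · field_simp

lemma corner_add_inv_pow_le_of_lt (hM : 0 < M) {u v : List (Fin (M ^ d))}
    (hlen : u.length = v.length) {k : Fin d} (hlt : corner d M lab u k < corner d M lab v k) :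
    corner d M lab u k + ((M : ℝ) ^ u.length)⁻¹ ≤ corner d M lab v k := by
  have hpos : (0 : ℝ) < (M : ℝ) ^ u.length := by positivity
  obtain ⟨a, ha⟩ := exists_natCast_div_eq_corner (lab := lab) u k
  obtain ⟨b, hb⟩ := exists_natCast_div_eq_corner (lab := lab) v k
  rw [ha, hb, ← hlen, div_lt_div_iff_of_pos_right hpos, Nat.cast_lt] at hlt
  rw [ha, hb, ← hlen, ← one_div, ← add_div, div_le_div_iff_of_pos_right hpos]
  exact_mod_cast hlt

lemma eq_of_corner_eq (hM : 0 < M) (hlab : Function.Injective lab) :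
    ∀ {u v : List (Fin (M ^ d))}, u.length = v.length →
      corner d M lab u = corner d M lab v → u = v
  | [], [], _, _ => rfl
  | a :: u, b :: v, hlen, h => by
    have hM' : (M : ℝ) ≠ 0 := by exact_mod_cast hM.ne'
    have hsum : ∀ k, (lab a k : ℝ) + corner d M lab u k = lab b k + corner d M lab v k :=
      fun k => by simpa only [corner_cons, div_left_inj' hM'] using congrFun h k
    have hdigit : ∀ (c : Fin M) (w : List (Fin (M ^ d))) k,
        ⌊(c : ℝ) + corner d M lab w k⌋₊ = c := fun c w k => by
      rw [add_comm, Nat.floor_add_natCast (corner_nonneg w k),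
        Nat.floor_eq_zero.mpr (corner_lt_one hM w k), zero_add]
    have hab : a = b := hlab <| funext fun k => Fin.ext <| by
      rw [← hdigit (lab a k) u k, ← hdigit (lab b k) v k, hsum]
    subst hab
    rw [eq_of_corner_eq hM hlab (by simpa using hlen)
      (funext fun k => add_left_cancel (hsum k))]

lemma OnFace.append_singleton {u : List (Fin (M ^ d))} {b : Fin (M ^ d)} {x : Fin d → ℝ}
    {k : Fin d} (hM : 0 < M) (hface : OnFace lab u x k) (hx : x ∈ cube d M lab (u ++ [b])) :
    ((lab b k : ℕ) = 0 ∨ (lab b k : ℕ) = M - 1) ∧ OnFace lab (u ++ [b]) x k := by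
  unfold OnFace at hface ⊢
  obtain ⟨hx₁, hx₂⟩ := hx k
  set t : ℝ := ((M : ℝ) ^ (u ++ [b]).length)⁻¹ with ht_def
  have ht : 0 < t := by positivity
  have hside : ((M : ℝ) ^ u.length)⁻¹ = M * t := by
    rw [ht_def, List.length_append, List.length_singleton, pow_succ, mul_inv, mul_left_comm,
      mul_inv_cancel₀ (by exact_mod_cast hM.ne'), mul_one]
  have hcorner : corner d M lab (u ++ [b]) k = corner d M lab u k + lab b k * t := by
    rw [corner_append hM, hQ, hside]
    simp only [corner, add_zero]
    field_simp
  have hlab := lab_add_one_le (lab := lab) b k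
  rw [hcorner] at hx₁ hx₂ ⊢
  rw [hside] at hface
  rcases hface with hbot | htop
  · have hzero : (lab b k : ℝ) = 0 := by nlinarith [(lab b k).val.cast_nonneg (α := ℝ)]
    refine ⟨.inl (by exact_mod_cast hzero), .inl ?_⟩
    rw [hbot, hzero, zero_mul, add_zero]
  · have htop' : (lab b k : ℝ) = M - 1 := by nlinarith
    refine ⟨.inr ?_, .inr ?_⟩
    · rw [← Nat.cast_inj (R := ℝ), Nat.cast_sub (by omega), htop', Nat.cast_one]
    · rw [htop, htop']
      ring

lemma OnFace.mem_lamB (hM : 0 < M) (hlab : LabSpec d M lab) {x : Fin d → ℝ} {k : Fin d} :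
    ∀ {u t : List (Fin (M ^ d))}, OnFace lab u x k → x ∈ cube d M lab (u ++ t) →
      ∀ a ∈ t, a ∈ LamB d M
  | _, [], _, _, _, ha => absurd ha List.not_mem_nil
  | u, b :: t, hface, hx, a, ha => by
    rw [← List.singleton_append, ← List.append_assoc] at hx
    obtain ⟨hb, hface'⟩ := hface.append_singleton hM (cube_append_subset hM _ t hx)
    rcases List.mem_cons.mp ha with rfl | ha
    · exact (hlab.2 a).2 ⟨k, hb⟩
    · exact OnFace.mem_lamB hM hlab hface' hx a ha

lemma exists_onFace_of_mem_cube_of_ne (hM : 0 < M) (hlab : Function.Injective lab)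
    {u v : List (Fin (M ^ d))} (hlen : u.length = v.length) (hne : u ≠ v) {x : Fin d → ℝ}
    (hu : x ∈ cube d M lab u) (hv : x ∈ cube d M lab v) : ∃ k, OnFace lab u x k := by
  obtain ⟨k, hk⟩ := Function.ne_iff.mp (mt (eq_of_corner_eq hM hlab hlen) hne)
  obtain ⟨hu₁, hu₂⟩ := hu k
  obtain ⟨hv₁, hv₂⟩ := hv k
  refine ⟨k, ?_⟩
  rcases hk.lt_or_gt with hlt | hgt
  · have := corner_add_inv_pow_le_of_lt hM hlen hlt
    exact .inr (by linarith)
  · have := corner_add_inv_pow_le_of_lt hM hlen.symm hgt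
    exact .inl (by linarith)

/-- Distinct cubes of the same level meet only along faces, and a point on a face of `Q_u`
lies only in boundary subcubes of `Q_u`. -/
lemma mem_lamB_of_mem_cube_of_ne (hM : 0 < M) (hlab : LabSpec d M lab)
    {u v t : List (Fin (M ^ d))} (hlen : u.length = v.length) (hne : u ≠ v) {x : Fin d → ℝ}
    (hv : x ∈ cube d M lab v) (hx : x ∈ cube d M lab (u ++ t)) : ∀ a ∈ t, a ∈ LamB d M := by
  obtain ⟨k, hface⟩ := exists_onFace_of_mem_cube_of_ne hM hlab.1.injective hlen hne
    (cube_append_subset hM u t hx) hv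
  exact hface.mem_lamB hM hlab hx

end Geometry

section Words

variable {d M : ℕ}

lemma wordTake_length (i : ℕ → Fin (M ^ d)) (n : ℕ) : (wordTake d M i n).length = n :=
  List.length_ofFn

lemma wordTake_succ (i : ℕ → Fin (M ^ d)) (n : ℕ) :
    wordTake d M i (n + 1) = wordTake d M i n ++ [i n] := by
  rw [wordTake, List.ofFn_succ', List.concat_eq_append]
  rfl

lemma wordTake_add (i : ℕ → Fin (M ^ d)) (n m : ℕ) :
    wordTake d M i (n + m) = wordTake d M i n ++ wordTake d M (shiftW d M n i) m := by
  induction m with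
  | zero => simp [wordTake]
  | succ m ih => rw [← add_assoc, wordTake_succ, ih, wordTake_succ, List.append_assoc]; rfl

lemma wordTake_prefix (i : ℕ → Fin (M ^ d)) {m n : ℕ} (h : m ≤ n) :
    wordTake d M i m <+: wordTake d M i n := by
  obtain ⟨t, rfl⟩ := Nat.exists_eq_add_of_le h
  rw [wordTake_add]
  exact List.prefix_append _ _

lemma exists_wordTake_eq_of_ne {i j : ℕ → Fin (M ^ d)} (h : i ≠ j) :
    ∃ N, wordTake d M i N = wordTake d M j N ∧ i N ≠ j N :=
  ⟨_, congrArg List.ofFn (funext fun t => not_not.mp (Nat.find_min _ t.isLt)),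
    Nat.find_spec (Function.ne_iff.mp h)⟩

lemma wordTake_succ_ne {i j : ℕ → Fin (M ^ d)} {N : ℕ}
    (hpre : wordTake d M i N = wordTake d M j N) (hN : i N ≠ j N) :
    wordTake d M i (N + 1) ≠ wordTake d M j (N + 1) := by
  simpa [wordTake_succ, hpre] using hN

variable {Ω : Type*} (X : List (Fin (M ^ d)) → Ω → Bool) (e : List (Fin (M ^ d))) (ω : Ω)

lemma substAux_append (pfx u v : List (Fin (M ^ d))) :
    substAux d M X e ω pfx (u ++ v) =
      substAux d M X e ω pfx u ++ substAux d M X e ω (pfx ++ u) v := by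
  induction u generalizing pfx with
  | nil => simp [substAux]
  | cons a u ih => simp [substAux, ih]

lemma substW_append_singleton (w : List (Fin (M ^ d))) (a : Fin (M ^ d)) :
    substW d M X e ω (w ++ [a]) =
      substW d M X e ω w ++ (if BdryDead d M X ω w then e else []) ++ [a] := by
  rw [substW, substAux_append]
  split_ifs <;> simp [substAux, substW, *]

lemma substW_prefix {u w : List (Fin (M ^ d))} (h : u <+: w) :
    substW d M X e ω u <+: substW d M X e ω w := by
  obtain ⟨t, rfl⟩ := h
  unfold substW
  rw [substAux_append]
  exact List.prefix_append _ _

lemma substW_wordTake_of_not_bdryDead (i : ℕ → Fin (M ^ d)) (N : ℕ)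
    (hnb : ∀ n, N < n → ¬ BdryDead d M X ω (wordTake d M i n)) (m : ℕ) :
    substW d M X e ω (wordTake d M i (N + m + 1)) =
      substW d M X e ω (wordTake d M i N) ++
        (if BdryDead d M X ω (wordTake d M i N) then e else []) ++
          wordTake d M (shiftW d M N i) (m + 1) := by
  induction m with
  | zero => rw [wordTake_succ, substW_append_singleton]; rfl
  | succ m ih =>
    rw [← add_assoc, wordTake_succ, substW_append_singleton, if_neg (hnb _ (by omega)), ih,
      wordTake_succ _ (m + 1), List.append_nil, List.append_assoc]
    rfl

end Words

section Projection

variable {d M : ℕ} {lab : Fin (M ^ d) → Fin d → Fin M}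
  {Ω : Type*} (X : List (Fin (M ^ d)) → Ω → Bool) (e : List (Fin (M ^ d))) (ω : Ω)

lemma piInf_mem_cube (hM : 0 < M) (i : ℕ → Fin (M ^ d)) (n : ℕ) :
    PiInf d M lab i ∈ cube d M lab (wordTake d M i n) :=
  iSup_corner_mem_cube hM _ (fun _ _ => wordTake_prefix i) n

lemma piTilde_mem_cube (hM : 0 < M) (i : ℕ → Fin (M ^ d)) (n : ℕ) :
    PiTilde d M lab X e ω i ∈ cube d M lab (substW d M X e ω (wordTake d M i n)) :=
  iSup_corner_mem_cube hM _ (fun _ _ h => substW_prefix X e ω (wordTake_prefix i h)) n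

lemma piInf_eq_hQ (hM : 1 < M) (i : ℕ → Fin (M ^ d)) (N : ℕ) :
    PiInf d M lab i = hQ d M lab (wordTake d M i N) (PiInf d M lab (shiftW d M N i)) :=
  eq_of_forall_mem_cube hM (fun m => wordTake d M i (N + m))
    (fun m => by rw [wordTake_length]; omega) (fun m => piInf_mem_cube (by omega) i (N + m))
    fun m => by
      rw [wordTake_add]
      exact hQ_mem_cube (by omega) _ (piInf_mem_cube (by omega) _ m)

lemma piTilde_eq_hQ (hM : 1 < M) (i : ℕ → Fin (M ^ d)) (N : ℕ)
    (hnb : ∀ n, N < n → ¬ BdryDead d M X ω (wordTake d M i n)) :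
    PiTilde d M lab X e ω i =
      hQ d M lab (substW d M X e ω (wordTake d M i N) ++
          (if BdryDead d M X ω (wordTake d M i N) then e else []))
        (PiInf d M lab (shiftW d M N i)) :=
  eq_of_forall_mem_cube hM (fun m => substW d M X e ω (wordTake d M i (N + m + 1)))
    (fun m => by
      rw [substW_wordTake_of_not_bdryDead X e ω i N hnb, List.length_append, wordTake_length]
      omega)
    (fun m => piTilde_mem_cube X e ω (by omega) i _)
    fun m => by
      rw [substW_wordTake_of_not_bdryDead X e ω i N hnb]
      exact hQ_mem_cube (by omega) _ (piInf_mem_cube (by omega) _ _)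

lemma piInf_eq_iff_piTilde_eq_of_not_bdryDead (hM : 1 < M) {i j : ℕ → Fin (M ^ d)} {N : ℕ}
    (hpre : wordTake d M i N = wordTake d M j N)
    (hi : ∀ n, N < n → ¬ BdryDead d M X ω (wordTake d M i n))
    (hj : ∀ n, N < n → ¬ BdryDead d M X ω (wordTake d M j n)) :
    PiInf d M lab i = PiInf d M lab j ↔ PiTilde d M lab X e ω i = PiTilde d M lab X e ω j := by
  rw [piInf_eq_hQ hM i N, piInf_eq_hQ hM j N, piTilde_eq_hQ X e ω hM i N hi,
    piTilde_eq_hQ X e ω hM j N hj, hpre, (hQ_injective (by omega) _).eq_iff,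
    (hQ_injective (by omega) _).eq_iff]

lemma not_bdryDead_of_piInf_eq (hM : 0 < M) (hlab : LabSpec d M lab) {i j : ℕ → Fin (M ^ d)}
    (hi : TInf d M X ω i) {N : ℕ} (hpre : wordTake d M i N = wordTake d M j N)
    (hN : i N ≠ j N) (h : PiInf d M lab i = PiInf d M lab j) :
    ∀ n, N < n → ¬ BdryDead d M X ω (wordTake d M i n) := by
  intro n hn hdead
  obtain ⟨t, ht⟩ := wordTake_prefix i hn
  have hx : PiInf d M lab i ∈ cube d M lab (wordTake d M i (N + 1) ++ (t ++ [i n])) := by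
    rw [← List.append_assoc, ht, ← wordTake_succ]
    exact piInf_mem_cube hM i (n + 1)
  have hv : PiInf d M lab i ∈ cube d M lab (wordTake d M j (N + 1)) :=
    h ▸ piInf_mem_cube hM j (N + 1)
  have hboundary : i n ∈ LamB d M :=
    mem_lamB_of_mem_cube_of_ne hM hlab (by simp only [wordTake_length])
      (wordTake_succ_ne hpre hN) hv hx _ (by simp)
  exact hdead (i n) hboundary (wordTake_succ i n ▸ hi (n + 1))

lemma not_bdryDead_of_piTilde_eq (hM : 0 < M) (hlab : LabSpec d M lab) {K : ℕ}
    (he : EtaSpec d M K e) {i j : ℕ → Fin (M ^ d)} {N : ℕ}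
    (hpre : wordTake d M i N = wordTake d M j N) (hN : i N ≠ j N)
    (h : PiTilde d M lab X e ω i = PiTilde d M lab X e ω j) :
    ∀ n, N < n → ¬ BdryDead d M X ω (wordTake d M i n) := by
  intro n hn hdead
  obtain ⟨-, -, a, l, hel, ha⟩ := he
  set V := substW d M X e ω (wordTake d M i N) ++
    (if BdryDead d M X ω (wordTake d M i N) then e else [])
  have hu : substW d M X e ω (wordTake d M i (N + 1)) = V ++ [i N] := by
    rw [wordTake_succ, substW_append_singleton]
  have hv : substW d M X e ω (wordTake d M j (N + 1)) = V ++ [j N] := by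
    rw [wordTake_succ, substW_append_singleton, ← hpre]
  obtain ⟨t, ht⟩ := substW_prefix X e ω (wordTake_prefix i hn)
  have hx : PiTilde d M lab X e ω i ∈
      cube d M lab (substW d M X e ω (wordTake d M i (N + 1)) ++ (t ++ e ++ [i n])) := by
    have := piTilde_mem_cube (lab := lab) X e ω hM i (n + 1)
    rw [wordTake_succ, substW_append_singleton, if_pos hdead, ← ht] at this
    simpa only [List.append_assoc] using this
  exact ha <| mem_lamB_of_mem_cube_of_ne hM hlab (by simp [hu, hv]) (by simpa [hu, hv] using hN)
    (h ▸ piTilde_mem_cube X e ω hM j (N + 1)) hx a (by simp [hel])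

end Projection

theorem statement9_general
    (d M : ℕ) (hM : 3 ≤ M)
    (lab : Fin (M ^ d) → Fin d → Fin M) (hlab : LabSpec d M lab)
    (K : ℕ) (e : List (Fin (M ^ d))) (he : EtaSpec d M K e)
    {Ω : Type*} (X : List (Fin (M ^ d)) → Ω → Bool) (ω : Ω)
    (i j : ℕ → Fin (M ^ d)) (hi : TInf d M X ω i) (hj : TInf d M X ω j) :
    (PiInf d M lab i = PiInf d M lab j →
      PiTilde d M lab X e ω i = PiTilde d M lab X e ω j) ∧
    (PiInf d M lab i ≠ PiInf d M lab j →
      PiTilde d M lab X e ω i ≠ PiTilde d M lab X e ω j) := by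
  suffices h : PiInf d M lab i = PiInf d M lab j ↔
      PiTilde d M lab X e ω i = PiTilde d M lab X e ω j from ⟨h.mp, mt h.mpr⟩
  rcases eq_or_ne i j with rfl | hij
  · exact iff_of_true rfl rfl
  obtain ⟨N, hpre, hN⟩ := exists_wordTake_eq_of_ne hij
  have hM₀ : 0 < M := by omega
  have key := piInf_eq_iff_piTilde_eq_of_not_bdryDead (lab := lab) X e ω (by omega) hpre
  constructor
  · intro h
    exact (key (not_bdryDead_of_piInf_eq X ω hM₀ hlab hi hpre hN h)
      (not_bdryDead_of_piInf_eq X ω hM₀ hlab hj hpre.symm hN.symm h.symm)).mp h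
  · intro h
    exact (key (not_bdryDead_of_piTilde_eq X e ω hM₀ hlab he hpre hN h)
      (not_bdryDead_of_piTilde_eq X e ω hM₀ hlab he hpre.symm hN.symm h.symm)).mpr h

theorem statement9
    (d M : ℕ) (hd : 1 ≤ d) (hM : 3 ≤ M)
    (lab : Fin (M ^ d) → Fin d → Fin M) (hlab : LabSpec d M lab)
    (K : ℕ) (e : List (Fin (M ^ d))) (he : EtaSpec d M K e)
    {Ω : Type*} (X : List (Fin (M ^ d)) → Ω → Bool) (ω : Ω)
    (i j : ℕ → Fin (M ^ d)) (hi : TInf d M X ω i) (hj : TInf d M X ω j) :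
    (PiInf d M lab i = PiInf d M lab j →
      PiTilde d M lab X e ω i = PiTilde d M lab X e ω j) ∧
    (PiInf d M lab i ≠ PiInf d M lab j →
      PiTilde d M lab X e ω i ≠ PiTilde d M lab X e ω j) :=
  statement9_general d M hM lab hlab K e he X ω i j hi hj

end FractalPercolation
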